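/- arXiv:1508.07969 — 3 statements merged into one kernel-verified Lean document; each statement's English description precedes it below -/
import Mathlib

section
/- Let c be a random variable with P(|c| = 1) = N_c/N and P(|c| = 0) = 1 − N_c/N, where 0 < N_c ≤ N. Then the sub-Gaussian norm ‖c‖_{ψ₂} := sup_{q ≥ 1} q^{−1/2}·E[|c|^q]^{1/q} equals (N_c/N)^{1/q*}·(q*)^{−1/2}, where q* = max(1, 2·log(N/N_c)). -/
/-!
The modulus `|c|` takes only the values `0` and `1`, so `E[|c|^q] = p := N_c/N` for every
`q ≥ 1`, and the supremum is that of `q ↦ p^(1/q) q^(-1/2)` over `q ≥ 1`. Its logarithm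
`-L/q - (log q)/2`, with `L = log(1/p) ≥ 0`, is maximised at `q = 2L` when `2L ≥ 1` and at
`q = 1` otherwise; both cases reduce to `log x ≤ x - 1`.
-/

open MeasureTheory

section Moments

variable {Ω : Type*} [MeasurableSpace Ω] {μ : Measure Ω}

lemma ae_eq_or_eq_of_measure_add_eq_one [IsProbabilityMeasure μ] {f : Ω → ℝ}
    (hf : Measurable f) {a b : ℝ} (hab : a ≠ b)
    (h : μ {ω | f ω = a} + μ {ω | f ω = b} = 1) :
    ∀ᵐ ω ∂μ, f ω = a ∨ f ω = b := by
  have ha : MeasurableSet {ω | f ω = a} := hf (measurableSet_singleton a)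
  have hb : MeasurableSet {ω | f ω = b} := hf (measurableSet_singleton b)
  have hdisj : Disjoint {ω | f ω = a} {ω | f ω = b} :=
    Set.disjoint_left.mpr fun ω hωa hωb => hab (hωa.symm.trans hωb)
  refine (ae_iff_measure_eq ?_).mpr ?_ <;> rw [Set.ofPred_or]
  · exact (ha.union hb).nullMeasurableSet
  · rw [measure_union hdisj hb, h, measure_univ]

lemma integral_rpow_of_ae_eq_zero_or_one {f : Ω → ℝ} (hf : Measurable f)
    (h01 : ∀ᵐ ω ∂μ, f ω = 0 ∨ f ω = 1) {q : ℝ} (hq : q ≠ 0) :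
    ∫ ω, f ω ^ q ∂μ = μ.real {ω | f ω = 1} := by
  have hind : (fun ω => f ω ^ q) =ᵐ[μ] {ω | f ω = 1}.indicator 1 := by
    filter_upwards [h01] with ω hω
    rcases hω with h0 | h1
    · simp [h0, Real.zero_rpow hq]
    · simp [h1]
  exact (integral_congr_ae hind).trans (integral_indicator_one (hf (measurableSet_singleton 1)))

end Moments

namespace Real

lemma rpow_one_div_div_sqrt_eq_exp {p r : ℝ} (hp : 0 < p) (hr : 0 < r) :
    p ^ (1 / r) / √r = exp (log p / r - log r / 2) := by
  rw [rpow_def_of_pos hp, sqrt_eq_rpow, rpow_def_of_pos hr, ← exp_sub]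
  ring_nf

lemma neg_div_sub_log_div_two_le {L q : ℝ} (hq : 1 ≤ q) :
    -L / q - log q / 2 ≤ -L / max 1 (2 * L) - log (max 1 (2 * L)) / 2 := by
  have hq0 : 0 < q := one_pos.trans_le hq
  rcases le_or_gt (2 * L) 1 with hsmall | hlarge
  · rw [max_eq_left hsmall, log_one, div_one]
    have hlog : 1 - q⁻¹ ≤ log q := by
      have := log_le_sub_one_of_pos (inv_pos.mpr hq0)
      rw [log_inv] at this
      linarith
    have hinv : q⁻¹ ≤ 1 := inv_le_one_of_one_le₀ hq
    rw [neg_div, div_eq_mul_inv]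
    nlinarith
  · have hLpos : 0 < L := by linarith
    have hhalf : -L / (2 * L) = -1 / 2 := by field_simp
    rw [max_eq_right hlarge.le, hhalf, neg_div]
    have hlog : log (2 * L) - log q ≤ 2 * L / q - 1 := by
      rw [← log_div (by positivity) hq0.ne']
      exact log_le_sub_one_of_pos (by positivity)
    rw [mul_div_assoc] at hlog
    linarith

lemma rpow_one_div_div_sqrt_le {p q : ℝ} (hp : 0 < p) (hq : 1 ≤ q) :
    p ^ (1 / q) / √q ≤
      p ^ (1 / max 1 (2 * log p⁻¹)) / √(max 1 (2 * log p⁻¹)) := by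
  rw [rpow_one_div_div_sqrt_eq_exp hp (one_pos.trans_le hq),
    rpow_one_div_div_sqrt_eq_exp hp (one_pos.trans_le (le_max_left _ _)), exp_le_exp,
    ← neg_neg (log p), ← log_inv]
  exact neg_div_sub_log_div_two_le hq

end Real

/-- If `|c|` is Bernoulli with `P(|c| = 1) = N_c/N` and
`P(|c| = 0) = 1 − N_c/N` (`0 < N_c ≤ N`), then the sub-Gaussian norm
`‖c‖_{ψ₂} = sup_{q ≥ 1} q^{−1/2} E[|c|^q]^{1/q}` equals
`(N_c/N)^{1/q*} (q*)^{−1/2}` with `q* = max(1, 2 log(N/N_c))`. -/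
theorem subGaussian_norm_bernoulli_modulus {Ω : Type*} [MeasurableSpace Ω]
    (μ : Measure Ω) [IsProbabilityMeasure μ] (c : Ω → ℂ) (hmeas : Measurable c)
    (N Nc : ℝ) (hNc : 0 < Nc) (hle : Nc ≤ N)
    (h1 : μ {ω | ‖c ω‖ = 1} = ENNReal.ofReal (Nc / N))
    (h0 : μ {ω | ‖c ω‖ = 0} = ENNReal.ofReal (1 - Nc / N)) :
    sSup {y : ℝ | ∃ q : ℝ, 1 ≤ q ∧
        y = (∫ ω, ‖c ω‖ ^ q ∂μ) ^ (1 / q) / Real.sqrt q} =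
      (Nc / N) ^ (1 / max 1 (2 * Real.log (N / Nc))) /
        Real.sqrt (max 1 (2 * Real.log (N / Nc))) := by
  have hp : 0 < Nc / N := div_pos hNc (hNc.trans_le hle)
  have hp_le_one : Nc / N ≤ 1 := div_le_one_of_le₀ hle (hNc.trans_le hle).le
  have hnorm : Measurable fun ω => ‖c ω‖ := hmeas.norm
  have h01 : ∀ᵐ ω ∂μ, ‖c ω‖ = 0 ∨ ‖c ω‖ = 1 := by
    refine ae_eq_or_eq_of_measure_add_eq_one hnorm zero_ne_one ?_
    rw [h0, h1, ← ENNReal.ofReal_add (by linarith) hp.le, sub_add_cancel, ENNReal.ofReal_one]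
  have hmoment : ∀ q : ℝ, 1 ≤ q → ∫ ω, ‖c ω‖ ^ q ∂μ = Nc / N := fun q hq => by
    rw [integral_rpow_of_ae_eq_zero_or_one hnorm h01 (by positivity), measureReal_def, h1,
      ENNReal.toReal_ofReal hp.le]
  rw [← inv_div Nc N]
  refine IsGreatest.csSup_eq ⟨⟨_, le_max_left _ _, by rw [hmoment _ (le_max_left _ _)]⟩, ?_⟩
  rintro _ ⟨q, hq, rfl⟩
  rw [hmoment q hq]
  exact Real.rpow_one_div_div_sqrt_le hp hq
end

section
/- Let A ∈ ℂ^{M×N} with columns A(m). Suppose that for all m₁ ≠ m₂, |⟨A(m₁), A(m₂)⟩| ≤ δ/K, and for all m, |‖A(m)‖₂² − 1| ≤ ε. Then for every index set Γ ⊆ {1,…,N} with |Γ| ≤ K, every eigenvalue of A_Γ*·A_Γ lies in [1 − δ − ε, 1 + δ + ε]; equivalently, A satisfies the RIP of order K with constant δ_K ≤ δ + ε. -/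
open scoped BigOperators

noncomputable def opNorm {𝕜 : Type*} [RCLike 𝕜] {m n : Type*} [Fintype m] [Fintype n]
    [DecidableEq n] (A : Matrix m n 𝕜) : ℝ :=
  ‖LinearMap.toContinuousLinearMap (Matrix.toEuclideanLin A)‖

/-!
Write `G = A_Γᴴ A_Γ`. The Hermitian matrix `G - 1` has diagonal entries `‖A(m)‖² - 1` of size at
most `ε` and off-diagonal entries `⟨A(m₁), A(m₂)⟩` of size at most `δ/K`, so by Gershgorin every
eigenvalue of `G - 1` has modulus at most `ε + (|Γ| - 1) δ/K ≤ ε + δ`. Its eigenvalues are real,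
and those of `G` are shifted by `1`; for a Hermitian matrix the operator norm is the spectral
radius (a C*-identity), which bounds `‖G - 1‖`.
-/

namespace Matrix

theorem conjTranspose_mul_self_apply_self {𝕜 m n : Type*} [RCLike 𝕜] [Fintype m]
    (A : Matrix m n 𝕜) (i : n) : (Aᴴ * A) i i = ((∑ k, ‖A k i‖ ^ 2 : ℝ) : 𝕜) := by
  simp [mul_apply, RCLike.conj_mul]

variable {n : Type*} [Fintype n] [DecidableEq n]

theorem mem_spectrum_of_mulVec_eq_smul {K : Type*} [Field K] {A : Matrix n n K} {μ : K}
    {v : n → K} (hv : v ≠ 0) (h : A *ᵥ v = μ • v) : μ ∈ spectrum K A := by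
  rw [← spectrum_toLin']
  exact (Module.End.hasEigenvalue_of_hasEigenvector
    ⟨Module.End.mem_eigenspace_iff.mpr h, hv⟩).mem_spectrum

theorem norm_le_of_mem_spectrum {K : Type*} [NormedField K] {A : Matrix n n K} {μ : K}
    (hμ : μ ∈ spectrum K A) {d r : ℝ} (hdiag : ∀ i, ‖A i i‖ ≤ d)
    (hoff : ∀ i j, i ≠ j → ‖A i j‖ ≤ r) :
    ‖μ‖ ≤ d + (Fintype.card n - 1 : ℕ) * r := by
  rw [← spectrum_toLin', ← Module.End.hasEigenvalue_iff_mem_spectrum] at hμ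
  obtain ⟨k, hk⟩ := eigenvalue_mem_ball hμ
  rw [mem_closedBall_iff_norm] at hk
  calc ‖μ‖ ≤ ‖A k k‖ + ‖μ - A k k‖ := norm_le_norm_add_norm_sub' μ (A k k)
    _ ≤ d + ∑ j ∈ Finset.univ.erase k, r :=
      add_le_add (hdiag k) <| hk.trans <|
        Finset.sum_le_sum fun j hj => hoff k j (Finset.ne_of_mem_erase hj).symm
    _ = d + (Fintype.card n - 1 : ℕ) * r := by
      rw [Finset.sum_const, Finset.card_erase_of_mem (Finset.mem_univ k), Finset.card_univ,
        nsmul_eq_mul]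

open scoped Matrix.Norms.L2Operator in
theorem IsHermitian.im_eq_zero_of_mem_spectrum {A : Matrix n n ℂ} (hA : A.IsHermitian) {μ : ℂ}
    (hμ : μ ∈ spectrum ℂ A) : μ.im = 0 :=
  hA.isSelfAdjoint.im_eq_zero_of_mem_spectrum hμ

open scoped Matrix.Norms.L2Operator in
theorem IsHermitian.opNorm_le {A : Matrix n n ℂ} (hA : A.IsHermitian) {c : ℝ} (hc : 0 ≤ c)
    (h : ∀ μ ∈ spectrum ℂ A, ‖μ‖ ≤ c) : opNorm A ≤ c := by
  have hrad : ENNReal.ofReal ‖A‖ ≤ ENNReal.ofReal c := by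
    rw [ofReal_norm, enorm_eq_nnnorm, ← hA.isSelfAdjoint.spectralRadius_eq_nnnorm]
    exact iSup₂_le fun μ hμ => by
      rw [← enorm_eq_nnnorm, ← ofReal_norm]
      exact ENNReal.ofReal_le_ofReal (h μ hμ)
  exact (ENNReal.ofReal_le_ofReal_iff hc).mp hrad

end Matrix

open Matrix

theorem gram_eigenvalues_rip_general {M N K : ℕ} (hK : 0 < K) (δ ε : ℝ)
    (hδ : 0 ≤ δ) (hε : 0 ≤ ε)
    (A : Matrix (Fin M) (Fin N) ℂ)
    (hinner : ∀ m₁ m₂ : Fin N, m₁ ≠ m₂ →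
      ‖∑ k, (starRingEnd ℂ) (A k m₁) * A k m₂‖ ≤ δ / K)
    (hnorm : ∀ m : Fin N, |(∑ k, ‖A k m‖ ^ 2) - 1| ≤ ε) :
    ∀ Γ : Finset (Fin N), Γ.card ≤ K →
      (∀ (lam : ℂ) (v : {x // x ∈ Γ} → ℂ), v ≠ 0 →
        ((A.submatrix id (Subtype.val : {x // x ∈ Γ} → Fin N)).conjTranspose *
            A.submatrix id (Subtype.val : {x // x ∈ Γ} → Fin N)).mulVec v = lam • v →
          lam.im = 0 ∧ 1 - δ - ε ≤ lam.re ∧ lam.re ≤ 1 + δ + ε) ∧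
      opNorm ((A.submatrix id (Subtype.val : {x // x ∈ Γ} → Fin N)).conjTranspose *
          A.submatrix id (Subtype.val : {x // x ∈ Γ} → Fin N) - 1) ≤ δ + ε := by
  intro Γ hΓ
  set S := A.submatrix id (Subtype.val : {x // x ∈ Γ} → Fin N)
  set B : Matrix Γ Γ ℂ := Sᴴ * S - 1 with hB_def
  have hB : B.IsHermitian := (isHermitian_conjTranspose_mul_self S).sub isHermitian_one
  have hdiag (i : Γ) : ‖B i i‖ ≤ ε := by
    rw [hB_def, Matrix.sub_apply, one_apply_eq, conjTranspose_mul_self_apply_self,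
      ← RCLike.ofReal_one, ← RCLike.ofReal_sub, RCLike.norm_ofReal]
    exact hnorm i
  have hoff (i j : Γ) (hij : i ≠ j) : ‖B i j‖ ≤ δ / K := by
    simpa [B, S, Matrix.mul_apply, one_apply_ne hij] using
      hinner i j (Subtype.coe_injective.ne hij)
  have hrows : ((Fintype.card Γ - 1 : ℕ) : ℝ) * (δ / K) ≤ δ := calc
    _ ≤ (K : ℝ) * (δ / K) := by
      gcongr
      exact_mod_cast (Nat.sub_le _ 1).trans (Fintype.card_coe Γ ▸ hΓ)
    _ = δ := mul_div_cancel₀ δ (Nat.cast_ne_zero.mpr hK.ne')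
  have hspec : ∀ μ ∈ spectrum ℂ B, ‖μ‖ ≤ δ + ε := fun μ hμ => by
    linarith [norm_le_of_mem_spectrum hμ hdiag hoff]
  refine ⟨fun lam v hv hlam => ?_, hB.opNorm_le (add_nonneg hδ hε) hspec⟩
  have hμ : lam - 1 ∈ spectrum ℂ B :=
    mem_spectrum_of_mulVec_eq_smul hv (by rw [sub_mulVec, one_mulVec, hlam, sub_smul, one_smul])
  have him := hB.im_eq_zero_of_mem_spectrum hμ
  have hre := abs_le.mp ((Complex.abs_re_le_norm _).trans (hspec _ hμ))
  simp only [Complex.sub_im, Complex.one_im, sub_zero, Complex.sub_re, Complex.one_re] at him hre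
  exact ⟨him, by linarith, by linarith⟩

/-- If all pairwise column inner products of `A` are at most `δ/K`
in absolute value, and all squared column norms are within `ε` of `1`, then for every
column set `Γ` with `|Γ| ≤ K` every eigenvalue of the Gram matrix `A_Γ* A_Γ` lies in
`[1 − δ − ε, 1 + δ + ε]`; equivalently `‖A_Γ* A_Γ − I‖_op ≤ δ + ε`. -/
theorem gram_eigenvalues_rip {M N K : ℕ} (hK : 0 < K) (δ ε : ℝ)
    (hδ : 0 ≤ δ) (hδ1 : δ ≤ 1) (hε : 0 ≤ ε) (hε1 : ε ≤ 1)
    (A : Matrix (Fin M) (Fin N) ℂ)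
    (hinner : ∀ m₁ m₂ : Fin N, m₁ ≠ m₂ →
      ‖∑ k, (starRingEnd ℂ) (A k m₁) * A k m₂‖ ≤ δ / K)
    (hnorm : ∀ m : Fin N, |(∑ k, ‖A k m‖ ^ 2) - 1| ≤ ε) :
    ∀ Γ : Finset (Fin N), Γ.card ≤ K →
      (∀ (lam : ℂ) (v : {x // x ∈ Γ} → ℂ), v ≠ 0 →
        ((A.submatrix id (Subtype.val : {x // x ∈ Γ} → Fin N)).conjTranspose *
            A.submatrix id (Subtype.val : {x // x ∈ Γ} → Fin N)).mulVec v = lam • v →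
          lam.im = 0 ∧ 1 - δ - ε ≤ lam.re ∧ lam.re ≤ 1 + δ + ε) ∧
      opNorm ((A.submatrix id (Subtype.val : {x // x ∈ Γ} → Fin N)).conjTranspose *
          A.submatrix id (Subtype.val : {x // x ∈ Γ} → Fin N) - 1) ≤ δ + ε :=
  gram_eigenvalues_rip_general hK δ ε hδ hε A hinner hnorm
end

section
/- Let F ∈ ℂ^{M×N} be the matrix with columns F(r) = (1/√(M·N_c))·(1, e^{2πi·rp/M}, …, e^{2πi·rp(M−1)/M})ᵀ for r = 0,…,N−1, where p is a positive integer coprime with M. Then ‖F‖_op² = ⌈N/M⌉/N_c. -/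
/-!
Reducing the exponents mod `M` factors `F = (M N_c)^{-1/2} • D * S`, where `D = (ζ^{jk})` is the
`M × M` DFT matrix and `S` sums the coordinates of a vector over the fibres of `r ↦ r p mod M`.
Since `Dᴴ D = M • 1`, the factor `D` scales every norm by `√M`, so `‖F‖² = ‖S‖² / N_c`. By
Cauchy–Schwarz on each fibre, `‖S‖²` is the size of the largest fibre, attained at its indicator
vector. As `p` is invertible mod `M`, the fibres are the residue classes mod `M` in `[0, N)`, and
the largest one is that of the multiples of `M`, of size `⌈N/M⌉`.
-/

open scoped BigOperators

open Finset Matrix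

section OpNorm

variable {𝕜 : Type*} [RCLike 𝕜] {l m n : Type*} [Fintype l] [Fintype m] [Fintype n]
  [DecidableEq n]

lemma norm_sq_toEuclideanLin_le (A : Matrix m n 𝕜) (x : EuclideanSpace 𝕜 n) :
    ‖toEuclideanLin A x‖ ^ 2 ≤ opNorm A ^ 2 * ‖x‖ ^ 2 := by
  rw [← mul_pow]
  exact pow_le_pow_left₀ (norm_nonneg _)
    ((LinearMap.toContinuousLinearMap (toEuclideanLin A)).le_opNorm x) 2

lemma opNorm_sq_le_of_norm_sq_le (A : Matrix m n 𝕜) {C : ℝ} (hC : 0 ≤ C)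
    (h : ∀ x, ‖toEuclideanLin A x‖ ^ 2 ≤ C * ‖x‖ ^ 2) : opNorm A ^ 2 ≤ C := by
  have : opNorm A ≤ √C := ContinuousLinearMap.opNorm_le_bound _ (Real.sqrt_nonneg C) fun x ↦ by
    rw [← Real.sqrt_sq (norm_nonneg x), ← Real.sqrt_mul hC]
    exact Real.le_sqrt_of_sq_le (h x)
  calc opNorm A ^ 2 ≤ √C ^ 2 := pow_le_pow_left₀ (norm_nonneg _) this 2
    _ = C := Real.sq_sqrt hC

lemma opNorm_smul (c : 𝕜) (A : Matrix m n 𝕜) : opNorm (c • A) = ‖c‖ * opNorm A := by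
  rw [opNorm, map_smul, map_smul, norm_smul, opNorm]

lemma norm_sq_toEuclideanLin_of_conjTranspose_mul_self [DecidableEq m] {A : Matrix m n 𝕜}
    {a : ℝ}
    (hA : Aᴴ * A = (a : 𝕜) • 1) (x : EuclideanSpace 𝕜 n) :
    ‖toEuclideanLin A x‖ ^ 2 = a * ‖x‖ ^ 2 := by
  apply (RCLike.ofReal_injective (K := 𝕜))
  calc ((‖toEuclideanLin A x‖ ^ 2 : ℝ) : 𝕜)
    _ = inner 𝕜 (toEuclideanLin A x) (toEuclideanLin A x) := by
        rw [inner_self_eq_norm_sq_to_K]; push_cast; rfl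
    _ = inner 𝕜 (toEuclideanLin (Aᴴ * A) x) x := by
        rw [toLpLin_mul_same, LinearMap.comp_apply, toEuclideanLin_conjTranspose_eq_adjoint,
          LinearMap.adjoint_inner_left]
    _ = ((a * ‖x‖ ^ 2 : ℝ) : 𝕜) := by
        rw [hA, map_smul, toLpLin_one, LinearMap.smul_apply, LinearMap.id_apply, inner_smul_left,
          inner_self_eq_norm_sq_to_K, RCLike.conj_ofReal]
        push_cast; rfl

lemma opNorm_mul_sq_of_norm_sq_eq [DecidableEq m] {D : Matrix l m 𝕜} {a : ℝ} (ha : 0 < a)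
    (hD : ∀ y, ‖toEuclideanLin D y‖ ^ 2 = a * ‖y‖ ^ 2) (A : Matrix m n 𝕜) :
    opNorm (D * A) ^ 2 = a * opNorm A ^ 2 := by
  have hDA : ∀ x, ‖toEuclideanLin (D * A) x‖ ^ 2 = a * ‖toEuclideanLin A x‖ ^ 2 := fun x ↦ by
    rw [toLpLin_mul_same, LinearMap.comp_apply, hD]
  apply le_antisymm
  · refine opNorm_sq_le_of_norm_sq_le _ (by positivity) fun x ↦ ?_
    rw [hDA, mul_assoc]
    exact mul_le_mul_of_nonneg_left (norm_sq_toEuclideanLin_le A x) ha.le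
  · rw [← le_div_iff₀' ha]
    refine opNorm_sq_le_of_norm_sq_le _ (by positivity) fun x ↦ ?_
    rw [div_mul_eq_mul_div, le_div_iff₀' ha, ← hDA]
    exact norm_sq_toEuclideanLin_le _ x

end OpNorm

section FiberSum

variable {𝕜 : Type*} [RCLike 𝕜] {ι κ : Type*} [DecidableEq κ]

def fiberSumMatrix (σ : ι → κ) : Matrix κ ι 𝕜 := of fun j r ↦ if σ r = j then 1 else 0

lemma mul_fiberSumMatrix_apply [Fintype κ] {m : Type*} (D : Matrix m κ 𝕜) (σ : ι → κ) (k : m)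
    (r : ι) : (D * (fiberSumMatrix σ : Matrix κ ι 𝕜)) k r = D k (σ r) := by
  simp [fiberSumMatrix, mul_apply]

lemma fiberSumMatrix_mulVec_apply [Fintype ι] (σ : ι → κ) (x : ι → 𝕜) (j : κ) :
    (fiberSumMatrix σ *ᵥ x) j = ∑ r with σ r = j, x r := by
  simp [fiberSumMatrix, mulVec, dotProduct, sum_filter]

lemma norm_sq_toEuclideanLin_fiberSumMatrix_le [Fintype ι] [Fintype κ] [DecidableEq ι]
    (σ : ι → κ) (x : EuclideanSpace 𝕜 ι) :
    ‖toEuclideanLin (fiberSumMatrix σ) x‖ ^ 2 ≤ (univ.sup fun j ↦ #{r | σ r = j}) * ‖x‖ ^ 2 := by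
  rw [EuclideanSpace.norm_sq_eq, EuclideanSpace.norm_sq_eq, ← sum_fiberwise univ σ, mul_sum]
  refine sum_le_sum fun j _ ↦ ?_
  calc ‖toEuclideanLin (fiberSumMatrix σ) x j‖ ^ 2 = ‖∑ r with σ r = j, x r‖ ^ 2 := by
        rw [toLpLin_apply, PiLp.toLp_apply, fiberSumMatrix_mulVec_apply]
    _ ≤ (∑ r with σ r = j, ‖x r‖) ^ 2 := pow_le_pow_left₀ (norm_nonneg _) (norm_sum_le _ _) 2
    _ ≤ #{r | σ r = j} * ∑ r with σ r = j, ‖x r‖ ^ 2 := sq_sum_le_card_mul_sum_sq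
    _ ≤ _ := mul_le_mul_of_nonneg_right (Nat.cast_le.mpr (le_sup (f := fun j ↦ #{r | σ r = j})
        (mem_univ j))) (by positivity)

lemma card_fiber_le_opNorm_fiberSumMatrix_sq [Fintype ι] [Fintype κ] [DecidableEq ι]
    (σ : ι → κ) (j : κ) :
    (#{r | σ r = j} : ℝ) ≤ opNorm (fiberSumMatrix σ : Matrix κ ι 𝕜) ^ 2 := by
  set n := #{r | σ r = j}
  let x : EuclideanSpace 𝕜 ι := WithLp.toLp 2 fun r ↦ if σ r = j then 1 else 0
  have hx : ‖x‖ ^ 2 = n := by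
    simp [x, EuclideanSpace.norm_sq_eq, apply_ite, sum_boole, n]
  have hSx : (n : ℝ) ^ 2 ≤ ‖toEuclideanLin (fiberSumMatrix σ) x‖ ^ 2 := by
    rw [EuclideanSpace.norm_sq_eq]
    calc (n : ℝ) ^ 2 = ‖toEuclideanLin (fiberSumMatrix σ) x j‖ ^ 2 := by
          rw [toLpLin_apply, PiLp.toLp_apply, fiberSumMatrix_mulVec_apply]
          simp [x, n, filter_filter]
      _ ≤ _ := single_le_sum (f := fun i ↦ ‖toEuclideanLin (fiberSumMatrix σ) x i‖ ^ 2)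
          (fun _ _ ↦ sq_nonneg _) (mem_univ j)
  have h := hSx.trans (norm_sq_toEuclideanLin_le _ x)
  rw [hx, sq] at h
  rcases n.eq_zero_or_pos with hn | hn
  · rw [hn, Nat.cast_zero]; positivity
  · exact le_of_mul_le_mul_right h (Nat.cast_pos.mpr hn)

lemma opNorm_fiberSumMatrix_sq [Fintype ι] [Fintype κ] [DecidableEq ι] (σ : ι → κ) :
    opNorm (fiberSumMatrix σ : Matrix κ ι 𝕜) ^ 2 = (univ.sup fun j ↦ #{r | σ r = j} : ℕ) := by
  refine le_antisymm (opNorm_sq_le_of_norm_sq_le _ (Nat.cast_nonneg _)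
    (norm_sq_toEuclideanLin_fiberSumMatrix_le σ)) ?_
  refine sup_induction (p := fun t : ℕ ↦ (t : ℝ) ≤ _) (by simp; positivity)
    (fun a ha b hb ↦ ?_) fun j _ ↦ card_fiber_le_opNorm_fiberSumMatrix_sq σ j
  rw [Nat.cast_max]
  exact max_le ha hb

end FiberSum

section DFT

variable {M : ℕ}

def dftMatrix (M : ℕ) (ζ : ℂ) : Matrix (Fin M) (Fin M) ℂ := of fun k j ↦ ζ ^ ((j : ℕ) * k)

lemma sum_fin_pow_of_pow_eq_one {η : ℂ} (hη : η ^ M = 1) :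
    ∑ k : Fin M, η ^ (k : ℕ) = if η = 1 then (M : ℂ) else 0 := by
  rw [Fin.sum_univ_eq_sum_range]
  split_ifs with h
  · simp [h]
  · rw [geom_sum_eq h, hη, sub_self, zero_div]

lemma IsPrimitiveRoot.conjTranspose_dftMatrix_mul_self {ζ : ℂ} (hζ : IsPrimitiveRoot ζ M) :
    (dftMatrix M ζ)ᴴ * dftMatrix M ζ = (M : ℂ) • 1 := by
  rcases M.eq_zero_or_pos with rfl | hM
  · exact Subsingleton.elim _ _
  have hζ0 : ζ ≠ 0 := hζ.ne_zero hM.ne'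
  have hconj : star ζ = ζ⁻¹ := (Complex.inv_eq_conj (hζ.norm'_eq_one hM.ne')).symm
  ext j j'
  have hη : ((ζ ^ (j : ℕ))⁻¹ * ζ ^ (j' : ℕ)) ^ M = 1 := by
    rw [mul_pow, inv_pow, ← pow_mul, ← pow_mul, pow_mul', pow_mul', hζ.pow_eq_one, one_pow,
      one_pow, inv_one, one_mul]
  have hη1 : (ζ ^ (j : ℕ))⁻¹ * ζ ^ (j' : ℕ) = 1 ↔ j = j' := by
    rw [inv_mul_eq_one₀ (pow_ne_zero _ hζ0), Fin.ext_iff]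
    exact ⟨fun h ↦ hζ.pow_inj j.isLt j'.isLt h, fun h ↦ h ▸ rfl⟩
  calc ((dftMatrix M ζ)ᴴ * dftMatrix M ζ) j j'
      = ∑ k : Fin M, ((ζ ^ (j : ℕ))⁻¹ * ζ ^ (j' : ℕ)) ^ (k : ℕ) := by
        refine (mul_apply ..).trans (sum_congr rfl fun k _ ↦ ?_)
        rw [conjTranspose_apply, dftMatrix, of_apply, of_apply, star_pow, hconj]
        simp only [mul_pow, inv_pow, ← pow_mul]
    _ = ((M : ℂ) • (1 : Matrix (Fin M) (Fin M) ℂ)) j j' := by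
        rw [sum_fin_pow_of_pow_eq_one hη, Matrix.smul_apply, one_apply, smul_eq_mul]
        simp only [hη1, mul_ite, mul_one, mul_zero]

end DFT

section Residues

variable {M N p : ℕ}

def mulModFin (hM : 0 < M) (p : ℕ) (r : Fin N) : Fin M := ⟨r * p % M, Nat.mod_lt _ hM⟩

lemma lt_ceil_div_iff_mul_lt (hM : 0 < M) (q : ℕ) : q < ⌈(N : ℝ) / M⌉₊ ↔ q * M < N := by
  rw [Nat.lt_ceil, lt_div_iff₀ (Nat.cast_pos.mpr hM)]
  exact_mod_cast Iff.rfl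

lemma card_fiber_mulModFin_le (hM : 0 < M) (hcop : p.Coprime M) (j : Fin M) :
    #{r : Fin N | mulModFin hM p r = j} ≤ ⌈(N : ℝ) / M⌉₊ := by
  rw [← card_range ⌈(N : ℝ) / M⌉₊]
  refine card_le_card_of_injOn (fun r ↦ (r : ℕ) / M) (fun r _ ↦ ?_) fun r hr r' hr' h ↦ ?_
  · rw [coe_range, Set.mem_Iio, lt_ceil_div_iff_mul_lt hM]
    exact (Nat.div_mul_le_self _ _).trans_lt r.isLt
  · simp only [coe_filter, mem_univ, true_and, Set.mem_ofPred_eq, mulModFin, Fin.ext_iff]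
      at hr hr'
    have hmod : (r : ℕ) % M = r' % M :=
      Nat.ModEq.cancel_right_of_coprime hcop.symm (hr.trans hr'.symm)
    have hdiv : (r : ℕ) / M = r' / M := h
    exact Fin.ext (by rw [← Nat.div_add_mod r M, ← Nat.div_add_mod r' M, hmod, hdiv])

lemma ceil_div_le_card_fiber_mulModFin_zero (hM : 0 < M) :
    ⌈(N : ℝ) / M⌉₊ ≤ #{r : Fin N | mulModFin hM p r = ⟨0, hM⟩} := by
  rw [← card_range ⌈(N : ℝ) / M⌉₊]
  refine card_le_card_of_surjOn (fun r ↦ (r : ℕ) / M) fun q hq ↦ ?_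
  rw [coe_range, Set.mem_Iio, lt_ceil_div_iff_mul_lt hM] at hq
  refine ⟨⟨q * M, hq⟩, ?_, Nat.mul_div_cancel q hM⟩
  simp [mulModFin, Nat.mul_right_comm q M p]

lemma sup_card_fiber_mulModFin (hM : 0 < M) (hcop : p.Coprime M) :
    (univ.sup fun j ↦ #{r : Fin N | mulModFin hM p r = j}) = ⌈(N : ℝ) / M⌉₊ :=
  le_antisymm (Finset.sup_le fun j _ ↦ card_fiber_mulModFin_le hM hcop j)
    ((ceil_div_le_card_fiber_mulModFin_zero (p := p) hM).trans
      (le_sup (f := fun j ↦ #{r : Fin N | mulModFin hM p r = j}) (mem_univ _)))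

end Residues

theorem chirp_frequency_matrix_opNorm_general {M N Nc p : ℕ} (hM : 0 < M)
    (hcop : Nat.Coprime p M)
    (F : Matrix (Fin M) (Fin N) ℂ)
    (hF : ∀ (k : Fin M) (r : Fin N),
      F k r = (1 / Real.sqrt (M * Nc) : ℝ) *
        Complex.exp (2 * Real.pi * Complex.I * (r : ℕ) * (p : ℕ) * (k : ℕ) / M)) :
    opNorm F ^ 2 = (⌈(N : ℝ) / M⌉₊ : ℝ) / Nc := by
  set ζ := Complex.exp (2 * Real.pi * Complex.I / M)
  have hζ : IsPrimitiveRoot ζ M := Complex.isPrimitiveRoot_exp M hM.ne'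
  have hF' : F = ((1 / √(M * Nc) : ℝ) : ℂ) •
      (dftMatrix M ζ * (fiberSumMatrix (mulModFin hM p) : Matrix (Fin M) (Fin N) ℂ)) := by
    ext k r
    have hmod : ζ ^ ((r : ℕ) * p % M) = ζ ^ ((r : ℕ) * p) := by
      rw [hζ.eq_orderOf, pow_mod_orderOf]
    rw [hF, Matrix.smul_apply, mul_fiberSumMatrix_apply, dftMatrix, of_apply, mulModFin,
      smul_eq_mul, pow_mul, hmod, ← pow_mul, ← Complex.exp_nat_mul]
    congr 2
    push_cast
    ring
  have hDFT : ∀ y, ‖toEuclideanLin (dftMatrix M ζ) y‖ ^ 2 = M * ‖y‖ ^ 2 :=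
    norm_sq_toEuclideanLin_of_conjTranspose_mul_self (by
      rw [RCLike.ofReal_natCast]; exact hζ.conjTranspose_dftMatrix_mul_self)
  rw [hF', opNorm_smul, mul_pow, opNorm_mul_sq_of_norm_sq_eq (Nat.cast_pos.mpr hM) hDFT,
    opNorm_fiberSumMatrix_sq, sup_card_fiber_mulModFin hM hcop, Complex.norm_real,
    Real.norm_eq_abs, sq_abs, div_pow, Real.sq_sqrt (by positivity)]
  field_simp

/-- For the matrix `F` with entries
`F (k, r) = (1/√(M N_c)) exp(2πi r p k / M)` where `p` is coprime with `M` and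
`M ≤ N`, the squared operator norm is `‖F‖_op² = ⌈N/M⌉ / N_c`. -/
theorem chirp_frequency_matrix_opNorm {M N Nc p : ℕ} (hM : 0 < M) (hMN : M ≤ N)
    (hNc : 0 < Nc) (hp : 0 < p) (hcop : Nat.Coprime p M)
    (F : Matrix (Fin M) (Fin N) ℂ)
    (hF : ∀ (k : Fin M) (r : Fin N),
      F k r = (1 / Real.sqrt (M * Nc) : ℝ) *
        Complex.exp (2 * Real.pi * Complex.I * (r : ℕ) * (p : ℕ) * (k : ℕ) / M)) :
    opNorm F ^ 2 = (⌈(N : ℝ) / M⌉₊ : ℝ) / Nc :=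
  chirp_frequency_matrix_opNorm_general hM hcop F hF
end
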